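/- arXiv:0902.0360 — 8 statements merged into one kernel-verified Lean document; each statement's English description precedes it below -/
import Mathlib

section
/- Let L be a finite distributive strong upper semilattice, let x ∈ M be meet-irreducible, and let x⁺ be a greatest lower bound of the set {y ∈ M | x < y} (i.e. IsGLB {y | y is meet-irreducible and x < y} x⁺). Then x < x⁺. -/
/-- A strong upper semilattice: any two elements with a common lower bound
have a greatest lower bound. -/
def StrongUpper (L : Type*) [SemilatticeSup L] : Prop :=
  ∀ x y : L, (∃ z, z ≤ x ∧ z ≤ y) → ∃ w, IsGLB {x, y} w

/-- Every interval is a distributive lattice. -/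
def IntervalDistrib (L : Type*) [SemilatticeSup L] : Prop :=
  ∀ a x y z w w' : L, a ≤ x → a ≤ y → a ≤ z →
    IsGLB {x, y} w → IsGLB {x ⊔ z, y ⊔ z} w' → w' = w ⊔ z

/-- Meet-irreducible element. -/
def MeetIrred {L : Type*} [SemilatticeSup L] [OrderTop L] (m : L) : Prop :=
  m ≠ ⊤ ∧ ∀ p q : L, IsGLB {p, q} m → m = p ∨ m = q

/-! A meet-irreducible element `x` is never the meet of finitely many elements strictly above it:
peel off one element `a` at a time, writing the meet as the binary meet of `a` with the meet `w`
of the rest (which exists since `x` bounds everything from below); irreducibility forces `x = w`,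
and we recurse down to the empty meet `⊤ ≠ x`. As `L` is finite, `x⁺` is such a meet, so `x ≠ x⁺`. -/

theorem isGLB_insert_iff_of_isGLB {α : Type*} [Preorder α] {s : Set α} {a w b : α}
    (hs : IsGLB s w) : IsGLB (insert a s) b ↔ IsGLB {a, w} b := by
  rw [IsGLB, IsGLB, lowerBounds_insert, lowerBounds_insert, lowerBounds_singleton,
    hs.lowerBounds_eq]

namespace StrongUpper

variable {L : Type*} [SemilatticeSup L]

theorem exists_isGLB_of_finite [OrderTop L] (hS : StrongUpper L) {s : Set L} (hs : s.Finite)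
    {m : L} (hm : m ∈ lowerBounds s) : ∃ w, IsGLB s w := by
  induction s, hs using Set.Finite.induction_on with
  | empty => exact ⟨⊤, isGLB_empty⟩
  | @insert a s _ _ ih =>
    rw [lowerBounds_insert] at hm
    obtain ⟨w, hw⟩ := ih hm.2
    obtain ⟨w', hw'⟩ := hS a w ⟨m, hm.1, hw.2 hm.2⟩
    exact ⟨w', (isGLB_insert_iff_of_isGLB hw).2 hw'⟩

end StrongUpper

theorem MeetIrred.not_isGLB_of_finite {L : Type*} [SemilatticeSup L] [OrderTop L]
    (hS : StrongUpper L) {m : L} (hm : MeetIrred m) {s : Set L} (hs : s.Finite)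
    (hlt : ∀ y ∈ s, m < y) : ¬ IsGLB s m := by
  induction s, hs using Set.Finite.induction_on with
  | empty => exact fun h => hm.1 (isGLB_empty_iff.1 h).eq_top
  | @insert a s _ hs ih =>
    intro h
    have hlt_s : ∀ y ∈ s, m < y := fun y hy => hlt y (Set.mem_insert_of_mem a hy)
    obtain ⟨w, hw⟩ := hS.exists_isGLB_of_finite hs (m := m) fun y hy => (hlt_s y hy).le
    rcases hm.2 a w ((isGLB_insert_iff_of_isGLB hw).1 h) with rfl | rfl
    · exact (hlt m (Set.mem_insert m s)).false
    · exact ih hlt_s hw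

theorem lt_meetIrred_succ_general {L : Type*} [SemilatticeSup L] [OrderTop L] [Finite L]
    (hS : StrongUpper L)
    (x xp : L) (hx : MeetIrred x)
    (hxp : IsGLB {y : L | MeetIrred y ∧ x < y} xp) :
    x < xp := by
  refine (hxp.2 fun y hy => hy.2.le).lt_of_ne ?_
  rintro rfl
  exact hx.not_isGLB_of_finite hS (Set.toFinite _) (fun y hy => hy.2) hxp

theorem lt_meetIrred_succ {L : Type*} [SemilatticeSup L] [OrderTop L] [Finite L]
    (hS : StrongUpper L) (hD : IntervalDistrib L)
    (x xp : L) (hx : MeetIrred x)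
    (hxp : IsGLB {y : L | MeetIrred y ∧ x < y} xp) :
    x < xp :=
  lt_meetIrred_succ_general hS x xp hx hxp
end

section
/- Let L be a finite distributive strong upper semilattice. The map ν : L → D given by ν(x) = {m ∈ M | x ≤ m} preserves all meets that exist in L: for all x, y, w ∈ L, if IsGLB {x, y} w then ν(w) = ν(x) ∪ ν(y) (union being the meet of D). -/
/-! An element `m` above `w = x ⊓ y` is, by distributivity of the interval `[w, ⊤]`, the meet
of `x ⊔ m` and `y ⊔ m`; if `m` is meet-irreducible it therefore equals one of them, i.e. it lies
above `x` or above `y`. -/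

section

variable {L : Type*} [SemilatticeSup L]

theorem IsGLB.sup_right_of_le (hS : StrongUpper L) (hD : IntervalDistrib L) {x y w m : L}
    (hw : IsGLB {x, y} w) (hwm : w ≤ m) : IsGLB {x ⊔ m, y ⊔ m} m := by
  obtain ⟨w', hw'⟩ := hS (x ⊔ m) (y ⊔ m) ⟨m, le_sup_right, le_sup_right⟩
  have hwx : w ≤ x := hw.1 (by simp)
  have hwy : w ≤ y := hw.1 (by simp)
  have hw'_eq : w' = m := by rw [hD w x y m w w' hwx hwy hwm hw hw', sup_eq_right.mpr hwm]
  exact hw'_eq ▸ hw'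

variable [OrderTop L]

theorem MeetIrred.le_or_le_of_isGLB (hS : StrongUpper L) (hD : IntervalDistrib L)
    {x y w m : L} (hm : MeetIrred m) (hw : IsGLB {x, y} w) (hwm : w ≤ m) : x ≤ m ∨ y ≤ m := by
  rcases hm.2 _ _ (hw.sup_right_of_le hS hD hwm) with h | h
  · exact .inl (h ▸ le_sup_left)
  · exact .inr (h ▸ le_sup_left)

end

theorem nu_preserves_glb_general {L : Type*} [SemilatticeSup L] [OrderTop L]
    (hS : StrongUpper L) (hD : IntervalDistrib L)
    (x y w : L) (hw : IsGLB {x, y} w) :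
    {m : L | MeetIrred m ∧ w ≤ m} =
      {m : L | MeetIrred m ∧ x ≤ m} ∪ {m : L | MeetIrred m ∧ y ≤ m} := by
  ext m
  simp only [Set.mem_ofPred_eq, Set.mem_union]
  constructor
  · rintro ⟨hm, hwm⟩
    exact (hm.le_or_le_of_isGLB hS hD hw hwm).imp (⟨hm, ·⟩) (⟨hm, ·⟩)
  · rintro (⟨hm, hxm⟩ | ⟨hm, hym⟩)
    · exact ⟨hm, (hw.1 (by simp)).trans hxm⟩
    · exact ⟨hm, (hw.1 (by simp)).trans hym⟩

theorem nu_preserves_glb {L : Type*} [SemilatticeSup L] [OrderTop L] [Finite L]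
    (hS : StrongUpper L) (hD : IntervalDistrib L)
    (x y w : L) (hw : IsGLB {x, y} w) :
    {m : L | MeetIrred m ∧ w ≤ m} =
      {m : L | MeetIrred m ∧ x ≤ m} ∪ {m : L | MeetIrred m ∧ y ≤ m} :=
  nu_preserves_glb_general hS hD x y w hw
end

section
/- Let L be a finite distributive strong upper semilattice, a a minimal element of L, F ∈ D an order filter on M with F ∩ Set.Ici a nonempty, and m ∈ L with IsGLB (F ∩ Set.Ici a) m. If p is meet-irreducible and m ≤ p, then p ∈ F. -/
/-!
In a distributive strong upper semilattice a meet-irreducible `p` is meet-prime: if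
`s ⊓ t ≤ p`, distributivity in the interval above `s ⊓ t` gives `(s ⊔ p) ⊓ (t ⊔ p) = p`, so
`s ≤ p` or `t ≤ p`. By induction over the finite set `F ∩ Ici a`, whose meet lies below `p` (so it is
not the empty meet `⊤`), some `s ∈ F` satisfies `s ≤ p`, and `p ∈ F` because `F` is upward closed in `M`.
-/

lemma IsGLB.insert_of_isGLB_pair {L : Type*} [Preorder L] {T : Set L} {s t w : L}
    (hT : IsGLB T t) (hw : IsGLB {s, t} w) : IsGLB (insert s T) w := by
  refine ⟨?_, fun z hz => hw.2 ?_⟩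
  · rintro x (rfl | hx)
    · exact hw.1 (Set.mem_insert _ _)
    · exact (hw.1 (Set.mem_insert_of_mem _ rfl)).trans (hT.1 hx)
  · rintro x (rfl | rfl)
    · exact hz (Set.mem_insert _ _)
    · exact hT.2 fun y hy => hz (Set.mem_insert_of_mem _ hy)

section StrongUpper

variable {L : Type*} [SemilatticeSup L] [OrderTop L]

lemma StrongUpper.exists_isGLB_of_finite_s7 (hS : StrongUpper L) {a : L} {S : Set L}
    (hfin : S.Finite) (haS : ∀ x ∈ S, a ≤ x) : ∃ w, IsGLB S w := by
  induction S, hfin using Set.Finite.induction_on with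
  | empty => exact ⟨⊤, isGLB_empty⟩
  | @insert s T _ _ ih =>
    obtain ⟨t, ht⟩ := ih fun x hx => haS x (Set.mem_insert_of_mem _ hx)
    have hat : a ≤ t := ht.2 fun x hx => haS x (Set.mem_insert_of_mem _ hx)
    obtain ⟨w, hw⟩ := hS s t ⟨a, haS s (Set.mem_insert _ _), hat⟩
    exact ⟨w, ht.insert_of_isGLB_pair hw⟩

lemma MeetIrred.le_or_le_of_isGLB_pair (hS : StrongUpper L)
    (hD : IntervalDistrib L) {p s t w : L} (hp : MeetIrred p) (hw : IsGLB {s, t} w)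
    (hwp : w ≤ p) : s ≤ p ∨ t ≤ p := by
  have hws : w ≤ s := hw.1 (Set.mem_insert _ _)
  have hwt : w ≤ t := hw.1 (Set.mem_insert_of_mem _ rfl)
  obtain ⟨w', hw'⟩ := hS (s ⊔ p) (t ⊔ p) ⟨p, le_sup_right, le_sup_right⟩
  have hw'p : w' = p := by rw [hD w s t p w w' hws hwt hwp hw hw', sup_eq_right.mpr hwp]
  subst hw'p
  rcases hp.2 _ _ hw' with h | h
  · exact Or.inl (le_sup_left.trans h.ge)
  · exact Or.inr (le_sup_left.trans h.ge)

lemma MeetIrred.exists_le_of_isGLB_le (hS : StrongUpper L) (hD : IntervalDistrib L)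
    {a p : L} (hp : MeetIrred p) {S : Set L} (hfin : S.Finite) (haS : ∀ x ∈ S, a ≤ x) {w : L}
    (hw : IsGLB S w) (hwp : w ≤ p) : ∃ s ∈ S, s ≤ p := by
  induction S, hfin using Set.Finite.induction_on generalizing w with
  | empty => exact absurd (top_le_iff.mp (isGLB_empty.unique hw ▸ hwp)) hp.1
  | @insert s T _ hT ih =>
    have haT : ∀ x ∈ T, a ≤ x := fun x hx => haS x (Set.mem_insert_of_mem _ hx)
    obtain ⟨t, ht⟩ := hS.exists_isGLB_of_finite_s7 hT haT
    obtain ⟨w₀, hw₀⟩ := hS s t ⟨a, haS s (Set.mem_insert _ _), ht.2 haT⟩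
    rw [(ht.insert_of_isGLB_pair hw₀).unique hw] at hw₀
    rcases hp.le_or_le_of_isGLB_pair hS hD hw₀ hwp with hsp | htp
    · exact ⟨s, Set.mem_insert _ _, hsp⟩
    · obtain ⟨x, hx, hxp⟩ := ih haT ht htp
      exact ⟨x, Set.mem_insert_of_mem _ hx, hxp⟩

end StrongUpper

theorem mem_filter_of_ge_fa_general {L : Type*} [SemilatticeSup L] [OrderTop L] [Finite L]
    (hS : StrongUpper L) (hD : IntervalDistrib L)
    (a : L)
    (F : Set L)
    (hF2 : ∀ m ∈ F, ∀ m', MeetIrred m' → m ≤ m' → m' ∈ F)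
    (m : L) (hm : IsGLB (F ∩ Set.Ici a) m)
    (p : L) (hp : MeetIrred p) (hmp : m ≤ p) :
    p ∈ F := by
  obtain ⟨s, ⟨hsF, -⟩, hsp⟩ :=
    hp.exists_le_of_isGLB_le hS hD (Set.toFinite _) (fun _ hx => hx.2) hm hmp
  exact hF2 s hsF p hp hsp

theorem mem_filter_of_ge_fa {L : Type*} [SemilatticeSup L] [OrderTop L] [Finite L]
    (hS : StrongUpper L) (hD : IntervalDistrib L)
    (a : L) (ha : IsMin a)
    (F : Set L) (hF1 : ∀ m ∈ F, MeetIrred m)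
    (hF2 : ∀ m ∈ F, ∀ m', MeetIrred m' → m ≤ m' → m' ∈ F)
    (hne : (F ∩ Set.Ici a).Nonempty)
    (m : L) (hm : IsGLB (F ∩ Set.Ici a) m)
    (p : L) (hp : MeetIrred p) (hmp : m ≤ p) :
    p ∈ F :=
  mem_filter_of_ge_fa_general hS hD a F hF2 m hm p hp hmp
end

section
/- Let L be a finite distributive strong upper semilattice, a a minimal element of L, and F, G ∈ D order filters on M. Suppose m, m₁, m₂, m₃ ∈ L satisfy IsGLB ((F ∪ G) ∩ Set.Ici a) m, IsGLB (F ∩ Set.Ici a) m₁, IsGLB (G ∩ Set.Ici a) m₂, and IsGLB {m₁, m₂} m₃. Then m = m₃; that is, f_a(F ∪ G) = f_a(F) ⊓ f_a(G). -/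
theorem lowerBounds_union_eq_of_isGLB {α : Type*} [Preorder α] {s t : Set α} {a b : α}
    (ha : IsGLB s a) (hb : IsGLB t b) : lowerBounds (s ∪ t) = lowerBounds {a, b} := by
  ext x
  simp only [lowerBounds_union, lowerBounds_insert, lowerBounds_singleton, Set.mem_inter_iff,
    Set.mem_Iic, ← le_isGLB_iff ha, ← le_isGLB_iff hb]

theorem IsGLB.union_of_isGLB_pair {α : Type*} [Preorder α] {s t : Set α} {a b c : α}
    (ha : IsGLB s a) (hb : IsGLB t b) (hc : IsGLB {a, b} c) : IsGLB (s ∪ t) c := by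
  rwa [IsGLB, lowerBounds_union_eq_of_isGLB ha hb]

theorem fa_union_general {L : Type*} [SemilatticeSup L]
    (a : L)
    (F G : Set L)
    (m m₁ m₂ m₃ : L)
    (hm : IsGLB ((F ∪ G) ∩ Set.Ici a) m)
    (hm₁ : IsGLB (F ∩ Set.Ici a) m₁)
    (hm₂ : IsGLB (G ∩ Set.Ici a) m₂)
    (hm₃ : IsGLB {m₁, m₂} m₃) :
    m = m₃ := by
  rw [Set.union_inter_distrib_right] at hm
  exact hm.unique (hm₁.union_of_isGLB_pair hm₂ hm₃)

theorem fa_union {L : Type*} [SemilatticeSup L] [OrderTop L] [Finite L]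
    (hS : StrongUpper L) (hD : IntervalDistrib L)
    (a : L) (ha : IsMin a)
    (F G : Set L)
    (hF1 : ∀ m ∈ F, MeetIrred m)
    (hF2 : ∀ m ∈ F, ∀ m', MeetIrred m' → m ≤ m' → m' ∈ F)
    (hG1 : ∀ m ∈ G, MeetIrred m)
    (hG2 : ∀ m ∈ G, ∀ m', MeetIrred m' → m ≤ m' → m' ∈ G)
    (m m₁ m₂ m₃ : L)
    (hm : IsGLB ((F ∪ G) ∩ Set.Ici a) m)
    (hm₁ : IsGLB (F ∩ Set.Ici a) m₁)
    (hm₂ : IsGLB (G ∩ Set.Ici a) m₂)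
    (hm₃ : IsGLB {m₁, m₂} m₃) :
    m = m₃ :=
  fa_union_general a F G m m₁ m₂ m₃ hm hm₁ hm₂ hm₃
end

section
/- Let L be a finite distributive strong upper semilattice, a a minimal element of L, and F, G ∈ D order filters on M. Suppose m, m₁, m₂ ∈ L satisfy IsGLB ((F ∩ G) ∩ Set.Ici a) m, IsGLB (F ∩ Set.Ici a) m₁, and IsGLB (G ∩ Set.Ici a) m₂. Then m = m₁ ⊔ m₂; that is, f_a(F ∩ G) = f_a(F) ⊔ f_a(G). -/
/-!
Every element of the finite semilattice `L` is the meet of the meet-irreducibles above it, so it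
suffices to show that a meet-irreducible `m' ≥ f_a(F) ⊔ f_a(G)` lies in `F ∩ G`. Distributivity of
the interval above `a` makes meet-irreducibles there meet-prime: from `f_a(F) ≤ m'` we get
`x ≤ m'` for some `x ∈ F ∩ Ici a`, and `m' ∈ F` because `F` is an up-set of `M`; likewise for `G`.
-/

section

variable {L : Type*} [SemilatticeSup L] [OrderTop L]

theorem IsGLB.isGLB_insert_iff {α : Type*} [Preorder α] {s : Set α} {b : α} (hb : IsGLB s b)
    (x w : α) : IsGLB (insert x s) w ↔ IsGLB {x, b} w := by
  rw [IsGLB, IsGLB, lowerBounds_insert, lowerBounds_insert, lowerBounds_singleton,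
    hb.lowerBounds_eq]

theorem StrongUpper.exists_isGLB (hS : StrongUpper L) {s : Set L} (hs : s.Finite) {z : L}
    (hz : z ∈ lowerBounds s) : ∃ w, IsGLB s w := by
  induction s, hs using Set.Finite.induction_on with
  | empty => exact ⟨⊤, isGLB_empty⟩
  | @insert x s _ _ ih =>
    rw [lowerBounds_insert] at hz
    obtain ⟨b, hb⟩ := ih hz.2
    obtain ⟨w, hw⟩ := hS x b ⟨z, hz.1, hb.2 hz.2⟩
    exact ⟨w, (hb.isGLB_insert_iff x w).2 hw⟩

theorem MeetIrred.le_or_le_of_isGLB_pair_s9 (hS : StrongUpper L) (hD : IntervalDistrib L)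
    {a x y w m : L} (hm : MeetIrred m) (hax : a ≤ x) (hay : a ≤ y) (ham : a ≤ m)
    (hw : IsGLB {x, y} w) (hwm : w ≤ m) : x ≤ m ∨ y ≤ m := by
  obtain ⟨w', hw'⟩ := hS (x ⊔ m) (y ⊔ m) ⟨m, le_sup_right, le_sup_right⟩
  obtain rfl : w' = m := (hD a x y m w w' hax hay ham hw hw').trans (sup_eq_right.2 hwm)
  exact (hm.2 _ _ hw').imp (fun h => le_sup_left.trans h.ge) (fun h => le_sup_left.trans h.ge)

theorem MeetIrred.exists_le_of_isGLB (hS : StrongUpper L) (hD : IntervalDistrib L)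
    {a m : L} (hm : MeetIrred m) (ham : a ≤ m) {s : Set L} (hs : s.Finite)
    (has : a ∈ lowerBounds s) {w : L} (hw : IsGLB s w) (hwm : w ≤ m) : ∃ x ∈ s, x ≤ m := by
  induction s, hs using Set.Finite.induction_on generalizing w with
  | empty => exact absurd (top_le_iff.1 ((hw.2 (by simp)).trans hwm)) hm.1
  | @insert x s _ hs ih =>
    rw [lowerBounds_insert] at has
    obtain ⟨b, hb⟩ := hS.exists_isGLB hs has.2
    rcases hm.le_or_le_of_isGLB_pair_s9 hS hD has.1 (hb.2 has.2) ham
      ((hb.isGLB_insert_iff x w).1 hw) hwm with hxm | hbm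
    · exact ⟨x, Set.mem_insert x s, hxm⟩
    · obtain ⟨y, hy, hym⟩ := ih has.2 hb hbm
      exact ⟨y, Set.mem_insert_of_mem x hy, hym⟩

theorem isGLB_setOf_meetIrred_le [Finite L] (x : L) : IsGLB {m | MeetIrred m ∧ x ≤ m} x := by
  induction x using WellFoundedGT.induction with
  | _ x ih =>
    refine ⟨fun _ hm => hm.2, fun c hc => ?_⟩
    by_cases hirr : MeetIrred x
    · exact hc ⟨hirr, le_rfl⟩
    by_cases htop : x = ⊤
    · exact htop ▸ le_top
    obtain ⟨p, q, hpq, hxp, hxq⟩ : ∃ p q, IsGLB {p, q} x ∧ x ≠ p ∧ x ≠ q := by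
      simpa [MeetIrred, htop] using hirr
    have below {y : L} (hy : y ∈ ({p, q} : Set L)) (hxy : x ≠ y) : c ≤ y :=
      (ih y ((hpq.1 hy).lt_of_ne hxy)).2 fun m hm => hc ⟨hm.1, (hpq.1 hy).trans hm.2⟩
    exact hpq.2 (by rintro y (rfl | rfl); exacts [below (by simp) hxp, below (by simp) hxq])

theorem MeetIrred.mem_of_isGLB_inter_Ici_le [Finite L] (hS : StrongUpper L)
    (hD : IntervalDistrib L) {a m w : L} {F : Set L}
    (hF : ∀ x ∈ F, ∀ m, MeetIrred m → x ≤ m → m ∈ F) (hm : MeetIrred m)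
    (hw : IsGLB (F ∩ Set.Ici a) w) (hwm : w ≤ m) : m ∈ F := by
  have haw : a ≤ w := hw.2 fun _ hx => hx.2
  obtain ⟨x, hx, hxm⟩ := hm.exists_le_of_isGLB hS hD (haw.trans hwm) (Set.toFinite _)
    (fun _ hx => hx.2) hw hwm
  exact hF x hx.1 m hm hxm

end

theorem fa_inter_general {L : Type*} [SemilatticeSup L] [OrderTop L] [Finite L]
    (hS : StrongUpper L) (hD : IntervalDistrib L)
    (a : L)
    (F G : Set L)
    (hF2 : ∀ m ∈ F, ∀ m', MeetIrred m' → m ≤ m' → m' ∈ F)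
    (hG2 : ∀ m ∈ G, ∀ m', MeetIrred m' → m ≤ m' → m' ∈ G)
    (m m₁ m₂ : L)
    (hm : IsGLB ((F ∩ G) ∩ Set.Ici a) m)
    (hm₁ : IsGLB (F ∩ Set.Ici a) m₁)
    (hm₂ : IsGLB (G ∩ Set.Ici a) m₂) :
    m = m₁ ⊔ m₂ := by
  have ha₁ : a ≤ m₁ := hm₁.2 fun _ hx => hx.2
  refine le_antisymm ((isGLB_setOf_meetIrred_le (m₁ ⊔ m₂)).2 ?_) (hm.2 ?_)
  · rintro m' ⟨hirr, hle⟩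
    exact hm.1 ⟨⟨hirr.mem_of_isGLB_inter_Ici_le hS hD hF2 hm₁ (le_sup_left.trans hle),
      hirr.mem_of_isGLB_inter_Ici_le hS hD hG2 hm₂ (le_sup_right.trans hle)⟩,
      ha₁.trans (le_sup_left.trans hle)⟩
  · rintro y ⟨⟨hyF, hyG⟩, hay⟩
    exact sup_le (hm₁.1 ⟨hyF, hay⟩) (hm₂.1 ⟨hyG, hay⟩)

theorem fa_inter {L : Type*} [SemilatticeSup L] [OrderTop L] [Finite L]
    (hS : StrongUpper L) (hD : IntervalDistrib L)
    (a : L) (ha : IsMin a)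
    (F G : Set L)
    (hF1 : ∀ m ∈ F, MeetIrred m)
    (hF2 : ∀ m ∈ F, ∀ m', MeetIrred m' → m ≤ m' → m' ∈ F)
    (hG1 : ∀ m ∈ G, MeetIrred m)
    (hG2 : ∀ m ∈ G, ∀ m', MeetIrred m' → m ≤ m' → m' ∈ G)
    (m m₁ m₂ : L)
    (hm : IsGLB ((F ∩ G) ∩ Set.Ici a) m)
    (hm₁ : IsGLB (F ∩ Set.Ici a) m₁)
    (hm₂ : IsGLB (G ∩ Set.Ici a) m₂) :
    m = m₁ ⊔ m₂ :=
  fa_inter_general hS hD a F G hF2 hG2 m m₁ m₂ hm hm₁ hm₂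
end

section
/- Let L be a finite distributive strong upper semilattice. For all x, y, w, t ∈ L, if IsGLB {x, y} w then IsGLB {x ⊔ t, y ⊔ t} (w ⊔ t). (This is the computation showing that the subgroup M(L) of relations is an ideal of the ring ℤ^L under the multiplication induced by join.) -/
/- `t` need not lie above `w`, so distributivity is applied in the interval above `w` with
`w ⊔ t` in place of `t`; since `w ≤ x, y`, this does not change `x ⊔ t` and `y ⊔ t`. -/
theorem isGLB_sup_of_isGLB_general {L : Type*} [SemilatticeSup L]
    (hS : StrongUpper L) (hD : IntervalDistrib L)
    (x y w t : L) (hw : IsGLB {x, y} w) :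
    IsGLB {x ⊔ t, y ⊔ t} (w ⊔ t) := by
  obtain ⟨w', hw'⟩ := hS (x ⊔ t) (y ⊔ t) ⟨t, le_sup_right, le_sup_right⟩
  have hwx : w ≤ x := hw.1 (by simp)
  have hwy : w ≤ y := hw.1 (by simp)
  have hx : x ⊔ (w ⊔ t) = x ⊔ t := by rw [← sup_assoc, sup_eq_left.mpr hwx]
  have hy : y ⊔ (w ⊔ t) = y ⊔ t := by rw [← sup_assoc, sup_eq_left.mpr hwy]
  have h : w' = w ⊔ (w ⊔ t) :=
    hD w x y (w ⊔ t) w w' hwx hwy le_sup_left hw (by rwa [hx, hy])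
  rwa [h, sup_left_idem] at hw'

theorem isGLB_sup_of_isGLB {L : Type*} [SemilatticeSup L] [OrderTop L] [Finite L]
    (hS : StrongUpper L) (hD : IntervalDistrib L)
    (x y w t : L) (hw : IsGLB {x, y} w) :
    IsGLB {x ⊔ t, y ⊔ t} (w ⊔ t) :=
  isGLB_sup_of_isGLB_general hS hD x y w t hw
end

section
/- Let K be a distributive lattice. Then the canonical map ι_K : K → V(K) into the valuation ring of K is injective. -/
/-- The subgroup of relations defining the valuation ring of a distributive
lattice `K`. -/
def VRelLat (K : Type*) [DistribLattice K] : AddSubgroup (FreeAbelianGroup K) :=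
  AddSubgroup.closure
    {g : FreeAbelianGroup K | ∃ x y : K,
      g = FreeAbelianGroup.of (x ⊔ y) + FreeAbelianGroup.of (x ⊓ y)
        - FreeAbelianGroup.of x - FreeAbelianGroup.of y}

/-- The valuation ring (as an additive group) of a distributive lattice `K`. -/
abbrev VLat (K : Type*) [DistribLattice K] : Type _ :=
  FreeAbelianGroup K ⧸ VRelLat K

/-- The universal valuation `ι_K : K → V(K)`. -/
def iotaLat {K : Type*} [DistribLattice K] (x : K) : VLat K :=
  QuotientAddGroup.mk (FreeAbelianGroup.of x)

/-!
Every valuation `v : K → G` factors through `ι_K`, so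
`ι_K a = ι_K b` forces `v a = v b` for all of them. If `a ≰ b`, the prime ideal theorem gives a
prime ideal `J` with `b ∈ J` and `a ∉ J`, and the indicator function of `J` is a valuation
separating `a` from `b`.
-/

open Order

def IsLatticeValuation {L M : Type*} [Lattice L] [Add M] (v : L → M) : Prop :=
  ∀ x y, v (x ⊔ y) + v (x ⊓ y) = v x + v y

namespace Order.Ideal

theorem IsPrime.isLatticeValuation_indicator {L M : Type*} [Lattice L] [AddCommMonoid M]
    {J : Ideal L} (hJ : J.IsPrime) (c : M) :
    IsLatticeValuation ((J : Set L).indicator fun _ => c) := by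
  intro x y
  have hinf : x ⊓ y ∈ J ↔ x ∈ J ∨ y ∈ J :=
    ⟨hJ.mem_or_mem, fun h => h.elim (J.lower inf_le_left) (J.lower inf_le_right)⟩
  by_cases hx : x ∈ J <;> by_cases hy : y ∈ J <;>
    simp [sup_mem_iff, hinf, hx, hy, add_comm]

theorem exists_isPrime_mem_notMem_of_not_le {L : Type*} [DistribLattice L] {a b : L}
    (hab : ¬a ≤ b) : ∃ J : Ideal L, J.IsPrime ∧ b ∈ J ∧ a ∉ J := by
  have hdisj : Disjoint (PFilter.principal a : Set L) (principal b : Set L) :=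
    Set.disjoint_left.mpr fun _ ha hb => hab (le_trans ha (mem_principal.mp hb))
  obtain ⟨J, hJ, hbJ, haJ⟩ := DistribLattice.prime_ideal_of_disjoint_filter_ideal hdisj
  exact ⟨J, hJ, hbJ mem_principal_self, Set.disjoint_left.mp haJ le_rfl⟩

end Order.Ideal

section Valuation

variable {K G : Type*} [DistribLattice K] [AddCommGroup G] {v : K → G}

theorem VRelLat_le_ker_lift (hv : IsLatticeValuation v) :
    VRelLat K ≤ (FreeAbelianGroup.lift v).ker := by
  rw [VRelLat, AddSubgroup.closure_le]
  rintro _ ⟨x, y, rfl⟩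
  simp [FreeAbelianGroup.lift_apply_of, hv x y]

def VLat.lift (v : K → G) (hv : IsLatticeValuation v) : VLat K →+ G :=
  QuotientAddGroup.lift _ (FreeAbelianGroup.lift v) (VRelLat_le_ker_lift hv)

theorem VLat.lift_iotaLat (hv : IsLatticeValuation v) (x : K) :
    VLat.lift v hv (iotaLat x) = v x :=
  FreeAbelianGroup.lift_apply_of v x

theorem le_of_iotaLat_eq {a b : K} (h : iotaLat a = iotaLat b) : a ≤ b := by
  by_contra hab
  obtain ⟨J, hJ, hbJ, haJ⟩ := Ideal.exists_isPrime_mem_notMem_of_not_le hab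
  have hv := hJ.isLatticeValuation_indicator (1 : ℤ)
  have := congrArg (VLat.lift _ hv) h
  simp [VLat.lift_iotaLat, hbJ, haJ] at this

end Valuation

theorem iotaLat_injective {K : Type*} [DistribLattice K] :
    Function.Injective (iotaLat (K := K)) :=
  fun _ _ h => le_antisymm (le_of_iotaLat_eq h) (le_of_iotaLat_eq h.symm)
end

section
/- Let L be a finite distributive strong upper semilattice that is locally principal: there is a set A of elements, each minimal in L, such that every x ∈ L lies above some a ∈ A (∀ x, ∃ a ∈ A, a ≤ x). Then the canonical map ι : L → V(L) is injective. -/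
/-- The subgroup of relations defining the valuation ring of `L`. -/
def MRel (L : Type*) [SemilatticeSup L] : AddSubgroup (FreeAbelianGroup L) :=
  AddSubgroup.closure
    {g : FreeAbelianGroup L | ∃ x y z w : L, IsGLB {x ⊔ z, y ⊔ z} w ∧
      g = FreeAbelianGroup.of (x ⊔ y ⊔ z) + FreeAbelianGroup.of w
        - FreeAbelianGroup.of (x ⊔ z) - FreeAbelianGroup.of (y ⊔ z)}

/-- The valuation ring (as an additive group) of `L`. -/
abbrev VRing (L : Type*) [SemilatticeSup L] : Type _ :=
  FreeAbelianGroup L ⧸ MRel L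

/-- The universal valuation `ι : L → V(L)`. -/
def iota {L : Type*} [SemilatticeSup L] (l : L) : VRing L :=
  QuotientAddGroup.mk (FreeAbelianGroup.of l)

/-- A valuation on `L` with values in an additive commutative group `G`. -/
def IsValuation {L : Type*} [SemilatticeSup L] {G : Type*} [AddCommGroup G]
    (f : L → G) : Prop :=
  ∀ x y z w : L, IsGLB {x ⊔ z, y ⊔ z} w →
    f (x ⊔ y ⊔ z) + f w = f (x ⊔ z) + f (y ⊔ z)

/-!
Suppose `ι s = ι t` but `t ≰ s`. Enlarge `s` to an element `m` maximal among those not above `t`.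
Interval distributivity makes `m` meet-prime: if `p ⊓ q ≤ m` with `p, q ≰ m`, then `p ⊔ m` and
`q ⊔ m` both lie above `t` by maximality, while their meet is `(p ⊓ q) ⊔ m = m`. Hence the
indicator of `Iic m` is an integer valuation; it factors through `V(L)` and separates `s` from `t`.
-/

namespace IsValuation

variable {L : Type*} [SemilatticeSup L] {G : Type*} [AddCommGroup G] {f : L → G}

theorem mRel_le_ker (hf : IsValuation f) : MRel L ≤ (FreeAbelianGroup.lift f).ker := by
  rw [MRel, AddSubgroup.closure_le]
  rintro g ⟨x, y, z, w, hw, rfl⟩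
  simp only [SetLike.mem_coe, AddMonoidHom.mem_ker, map_sub, map_add,
    FreeAbelianGroup.lift_apply_of, hf x y z w hw]
  abel

def liftVRing (hf : IsValuation f) : VRing L →+ G :=
  QuotientAddGroup.lift (MRel L) (FreeAbelianGroup.lift f) hf.mRel_le_ker

@[simp]
theorem liftVRing_iota (hf : IsValuation f) (l : L) : hf.liftVRing (iota l) = f l := by
  simp [liftVRing, iota]

theorem apply_eq_of_iota_eq (hf : IsValuation f) {s t : L} (h : iota s = iota t) :
    f s = f t := by
  rw [← hf.liftVRing_iota, ← hf.liftVRing_iota, h]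

end IsValuation

section MeetPrime

variable {L : Type*} [SemilatticeSup L]

def IsMeetPrime (m : L) : Prop :=
  ∀ p q w : L, IsGLB {p, q} w → w ≤ m → p ≤ m ∨ q ≤ m

theorem IsMeetPrime.isValuation_indicator_Iic {m : L} (hm : IsMeetPrime m) :
    IsValuation ((Set.Iic m).indicator (1 : L → ℤ)) := by
  intro x y z w hw
  have hwx : w ≤ x ⊔ z := hw.1 (by simp)
  have hwy : w ≤ y ⊔ z := hw.1 (by simp)
  have hxyz : x ⊔ y ⊔ z ≤ m ↔ x ⊔ z ≤ m ∧ y ⊔ z ≤ m := by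
    simp only [sup_le_iff]
    tauto
  by_cases hx : x ⊔ z ≤ m <;> by_cases hy : y ⊔ z ≤ m
  · simp [hxyz, hx, hy, hwx.trans hx]
  · simp [hxyz, hx, hy, hwx.trans hx]
  · simp [hxyz, hx, hy, hwy.trans hy]
  · have hwm : ¬ w ≤ m := fun hwm => (hm _ _ w hw hwm).elim hx hy
    simp [hxyz, hx, hy, hwm]

theorem isMeetPrime_of_maximal_not_ge (hS : StrongUpper L) (hD : IntervalDistrib L) {t m : L}
    (hm : Maximal (fun u => ¬ t ≤ u) m) : IsMeetPrime m := by
  intro p q w hw hwm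
  have hwp : w ≤ p := hw.1 (by simp)
  have hwq : w ≤ q := hw.1 (by simp)
  have t_le_sup : ∀ r, ¬ r ≤ m → t ≤ r ⊔ m := fun r hr => by
    by_contra htr
    exact hr (le_sup_left.trans (hm.2 htr le_sup_right))
  by_contra! hpq
  obtain ⟨w', hw'⟩ := hS (p ⊔ m) (q ⊔ m) ⟨w, le_sup_of_le_left hwp, le_sup_of_le_left hwq⟩
  have hw'm : w' = m := by
    rw [hD w p q m w w' hwp hwq hwm hw hw', sup_eq_right.mpr hwm]
  have htw' : t ≤ w' :=
    hw'.2 (by rintro u (rfl | rfl) <;> [exact t_le_sup p hpq.1; exact t_le_sup q hpq.2])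
  exact hm.1 (hw'm ▸ htw')

theorem exists_valuation_ne_of_not_le [Finite L] (hS : StrongUpper L) (hD : IntervalDistrib L)
    {s t : L} (hts : ¬ t ≤ s) : ∃ f : L → ℤ, IsValuation f ∧ f s ≠ f t := by
  obtain ⟨m, hsm, hm⟩ := Finite.exists_le_maximal (p := fun u => ¬ t ≤ u) hts
  refine ⟨_, (isMeetPrime_of_maximal_not_ge hS hD hm).isValuation_indicator_Iic, ?_⟩
  simp [hsm, hm.1]

end MeetPrime

theorem iota_injective_of_locally_principal_general {L : Type*} [SemilatticeSup L]
    [Finite L] (hS : StrongUpper L) (hD : IntervalDistrib L) :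
    Function.Injective (iota (L := L)) := by
  have le_of_iota_eq : ∀ s t : L, iota s = iota t → t ≤ s := fun s t h => by
    by_contra hts
    obtain ⟨f, hf, hne⟩ := exists_valuation_ne_of_not_le hS hD hts
    exact hne (hf.apply_eq_of_iota_eq h)
  exact fun s t h => le_antisymm (le_of_iota_eq t s h.symm) (le_of_iota_eq s t h)

theorem iota_injective_of_locally_principal {L : Type*} [SemilatticeSup L] [OrderTop L]
    [Finite L] (hS : StrongUpper L) (hD : IntervalDistrib L)
    (A : Set L) (hA : ∀ a ∈ A, IsMin a) (hcov : ∀ x : L, ∃ a ∈ A, a ≤ x) :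
    Function.Injective (iota (L := L)) :=
  iota_injective_of_locally_principal_general hS hD
end
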